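/- arXiv:1612.00804 — 2 statements merged into one kernel-verified Lean document; each statement's English description precedes it below -/
import Mathlib

section
/- (OMP single-step gain.) Let l : ℝ^p → ℝ be differentiable, let S ⊆ {1,…,p} with |S| = i, and suppose l is M̃-smooth on Ω̃_{i+1} with M̃ > 0. Let s be a coordinate maximizing |(∇l(β^{(S)}))_j| over all j ∈ {1,…,p}. Then l(β^{(S∪{s})}) − l(β^{(S)}) ≥ (1/(2M̃)) · ‖∇l(β^{(S)})‖_∞². -/
open Finset

noncomputable section

/-- Number of nonzero coordinates (the "ℓ₀ norm") of a vector. -/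
def spar {p : ℕ} (v : Fin p → ℝ) : ℕ := (Finset.univ.filter fun i => v i ≠ 0).card

/-- Support of a vector, as a `Finset`. -/
def suppF {p : ℕ} (v : Fin p → ℝ) : Finset (Fin p) :=
  Finset.univ.filter fun i => v i ≠ 0

/-- `Ω_k`: pairs of `k`-sparse vectors differing in at most `k` coordinates. -/
def Omega {p : ℕ} (k : ℕ) : Set ((Fin p → ℝ) × (Fin p → ℝ)) :=
  {q | spar q.1 ≤ k ∧ spar q.2 ≤ k ∧ spar (q.1 - q.2) ≤ k}

/-- `Ω̃_k`: pairs of `k`-sparse vectors differing in at most one coordinate. -/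
def OmegaT {p : ℕ} (k : ℕ) : Set ((Fin p → ℝ) × (Fin p → ℝ)) :=
  {q | spar q.1 ≤ k ∧ spar q.2 ≤ k ∧ spar (q.1 - q.2) ≤ 1}

/-- `l` is `m`-strongly concave on `Ω`. -/
def RStrongConcaveOn {p : ℕ} (l : (Fin p → ℝ) → ℝ) (m : ℝ)
    (Ω : Set ((Fin p → ℝ) × (Fin p → ℝ))) : Prop :=
  ∀ x y : Fin p → ℝ, (x, y) ∈ Ω →
    l y - l x - fderiv ℝ l x (y - x) ≤ -(m / 2) * ∑ i, (y i - x i) ^ 2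

/-- `l` is `M`-smooth on `Ω`. -/
def RSmoothOn {p : ℕ} (l : (Fin p → ℝ) → ℝ) (M : ℝ)
    (Ω : Set ((Fin p → ℝ) × (Fin p → ℝ))) : Prop :=
  ∀ x y : Fin p → ℝ, (x, y) ∈ Ω →
    -(M / 2) * ∑ i, (y i - x i) ^ 2 ≤ l y - l x - fderiv ℝ l x (y - x)

/-!
Moving from `β S` by `g / M` along the coordinate `s`, where `g` is the partial derivative there,
keeps the pair of points in `Ω̃_{i+1}`; `M`-smoothness then gives a gain of at least
`g / M * g - M / 2 * (g / M) ^ 2 = g ^ 2 / (2 * M)`, and the new point is supported in `insert s S`,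
so `β (insert s S)` gains at least as much.
-/

lemma spar_le_card_of_suppF_subset {p : ℕ} {v : Fin p → ℝ} {T : Finset (Fin p)}
    (h : suppF v ⊆ T) : spar v ≤ T.card :=
  card_le_card h

lemma suppF_single_subset {p : ℕ} (s : Fin p) (t : ℝ) :
    suppF (Pi.single s t : Fin p → ℝ) ⊆ {s} := by
  intro j hj
  by_contra hjs
  simp_all [suppF, Pi.single_apply]

lemma suppF_add_single_subset {p : ℕ} (x : Fin p → ℝ) (s : Fin p) (t : ℝ) :
    suppF (x + Pi.single s t) ⊆ insert s (suppF x) := by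
  intro j hj
  by_cases hjs : j = s
  · exact mem_insert.2 (Or.inl hjs)
  · simp_all [suppF, Pi.single_apply]

lemma mem_OmegaT_add_single {p k : ℕ} {x : Fin p → ℝ} {s : Fin p} {t : ℝ}
    (hx : spar x ≤ k) (hy : spar (x + Pi.single s t) ≤ k) :
    (x, x + Pi.single s t) ∈ OmegaT k := by
  refine ⟨hx, hy, ?_⟩
  rw [sub_add_cancel_left, ← Pi.single_neg]
  exact spar_le_card_of_suppF_subset (suppF_single_subset s (-t))

lemma RSmoothOn.sub_ge_of_mem_add_single {p : ℕ} {l : (Fin p → ℝ) → ℝ} {M : ℝ}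
    {Ω : Set ((Fin p → ℝ) × (Fin p → ℝ))} (h : RSmoothOn l M Ω) {x : Fin p → ℝ} {s : Fin p}
    {t : ℝ} (hmem : (x, x + Pi.single s t) ∈ Ω) :
    t * fderiv ℝ l x (Pi.single s 1) - M / 2 * t ^ 2 ≤ l (x + Pi.single s t) - l x := by
  have hsum : ∑ j, (Pi.single s t : Fin p → ℝ) j ^ 2 = t ^ 2 := by
    rw [Fintype.sum_eq_single s fun j hjs => by simp [hjs], Pi.single_eq_same]
  have hderiv : fderiv ℝ l x (Pi.single s t) = t * fderiv ℝ l x (Pi.single s 1) := by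
    rw [← smul_eq_mul, ← map_smul, ← Pi.single_smul', smul_eq_mul, mul_one]
  have hsmooth := h _ _ hmem
  simp only [add_sub_cancel_left, Pi.add_apply, hsum, hderiv] at hsmooth
  linarith

/-- Also true for `M = 0`, where both sides are `0` because `x / 0 = 0`. -/
lemma div_mul_sub_half_mul_div_sq (g M : ℝ) :
    g / M * g - M / 2 * (g / M) ^ 2 = g ^ 2 / (2 * M) := by
  rcases eq_or_ne M 0 with rfl | hM
  · simp
  · field_simp
    ring

theorem omp_single_step_gain_general
    (p : ℕ) (l : (Fin p → ℝ) → ℝ)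
    (β : Finset (Fin p) → (Fin p → ℝ))
    (hβsupp : ∀ S : Finset (Fin p), suppF (β S) ⊆ S)
    (hβmax : ∀ S : Finset (Fin p), ∀ v : Fin p → ℝ, suppF v ⊆ S → l v ≤ l (β S))
    (S : Finset (Fin p)) (i : ℕ) (hScard : S.card = i)
    (M : ℝ)
    (hsmooth : RSmoothOn l M (OmegaT (i + 1)))
    (s : Fin p)
    (hs : ∀ j : Fin p, |fderiv ℝ l (β S) (Pi.single j 1)| ≤
      |fderiv ℝ l (β S) (Pi.single s 1)|) :
    1 / (2 * M) * (⨆ j : Fin p, |fderiv ℝ l (β S) (Pi.single j 1)|) ^ 2 ≤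
      l (β (insert s S)) - l (β S) := by
  set g := fderiv ℝ l (β S) (Pi.single s 1)
  set y := β S + Pi.single s (g / M)
  have hsupp_y : suppF y ⊆ insert s S :=
    (suppF_add_single_subset _ _ _).trans (insert_subset_insert s (hβsupp S))
  have hspar_β : spar (β S) ≤ i + 1 := by
    have := spar_le_card_of_suppF_subset (hβsupp S)
    omega
  have hspar_y : spar y ≤ i + 1 :=
    (spar_le_card_of_suppF_subset hsupp_y).trans (hScard ▸ card_insert_le s S)
  have : Nonempty (Fin p) := ⟨s⟩
  rw [ciSup_eq_of_forall_le_of_forall_lt_exists_gt hs fun _ hw => ⟨s, hw⟩, sq_abs]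
  calc 1 / (2 * M) * g ^ 2 = g / M * g - M / 2 * (g / M) ^ 2 := by
        rw [div_mul_sub_half_mul_div_sq]
        ring
    _ ≤ l y - l (β S) := hsmooth.sub_ge_of_mem_add_single (mem_OmegaT_add_single hspar_β hspar_y)
    _ ≤ l (β (insert s S)) - l (β S) := by
        gcongr
        exact hβmax _ _ hsupp_y

/-- OMP single-step gain. -/
theorem omp_single_step_gain
    (p : ℕ) (l : (Fin p → ℝ) → ℝ) (hl : Differentiable ℝ l)
    (β : Finset (Fin p) → (Fin p → ℝ))
    (hβsupp : ∀ S : Finset (Fin p), suppF (β S) ⊆ S)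
    (hβmax : ∀ S : Finset (Fin p), ∀ v : Fin p → ℝ, suppF v ⊆ S → l v ≤ l (β S))
    (S : Finset (Fin p)) (i : ℕ) (hScard : S.card = i)
    (M : ℝ) (hM : 0 < M)
    (hsmooth : RSmoothOn l M (OmegaT (i + 1)))
    (s : Fin p)
    (hs : ∀ j : Fin p, |fderiv ℝ l (β S) (Pi.single j 1)| ≤
      |fderiv ℝ l (β S) (Pi.single s 1)|) :
    1 / (2 * M) * (⨆ j : Fin p, |fderiv ℝ l (β S) (Pi.single j 1)|) ^ 2 ≤
      l (β (insert s S)) - l (β S) :=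
  omp_single_step_gain_general p l β hβsupp hβmax S i hScard M hsmooth s hs
end
end

section
/- (OMP increment lemma.) Let l : ℝ^p → ℝ be differentiable with associated set function f(S) = l(β^{(S)}) − l(0), let S* be a set of size k, and let S = S_i^P be the set selected after i steps of OMP. Suppose l is m-strongly concave on Ω_{i+k} and M̃-smooth on Ω̃_{i+1}, with 0 < m ≤ M̃. Then k · (f(S_{i+1}^P) − f(S_i^P)) ≥ (m/M̃) · (f(S*) − f(S_i^P)). -/
open Finset

noncomputable section

/-!
Write `x = β(S)` with `S = S_i^P` and `G` for the partial derivative of `l` at `x` chosen by OMP,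
which dominates every other partial derivative. Since `x` maximizes `l` on vectors supported in
`S`, the partial derivatives on `S` vanish. Strong concavity along `β(S*) - x` and the bound
`a d - (m/2) a² ≤ d² / (2m)` in each of the at most `k` coordinates of `S*` give
`f(S*) - f(S) ≤ k G² / (2m)`. Smoothness along the single step `(G/M) e_{s_i}`, which stays
supported in `S_{i+1}^P`, gives `f(S_{i+1}^P) - f(S) ≥ G² / (2M)`. Multiply the first bound
by `m/M` and compare.
-/

variable {p : ℕ}

lemma suppF_subset_iff {v : Fin p → ℝ} {S : Finset (Fin p)} :
    suppF v ⊆ S ↔ ∀ j ∉ S, v j = 0 := by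
  simp only [suppF, subset_iff, mem_filter, mem_univ, true_and]
  exact ⟨fun h j hj => by_contra fun hv => hj (h hv), fun h j hv => by_contra fun hj => hv (h j hj)⟩

lemma suppF_sub_subset_union {x y : Fin p → ℝ} {S T : Finset (Fin p)}
    (hx : suppF x ⊆ S) (hy : suppF y ⊆ T) : suppF (x - y) ⊆ S ∪ T := by
  rw [suppF_subset_iff] at *
  intro j hj
  rw [mem_union, not_or] at hj
  simp [hx j hj.1, hy j hj.2]

lemma suppF_add_smul_single_subset {x : Fin p → ℝ} {S : Finset (Fin p)} (hx : suppF x ⊆ S)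
    (j : Fin p) (c : ℝ) : suppF (x + c • Pi.single j 1) ⊆ insert j S := by
  rw [suppF_subset_iff] at *
  intro i hi
  rw [mem_insert, not_or] at hi
  simp [hx i hi.2, hi.1]

lemma spar_neg_smul_single_le_one (j : Fin p) (c : ℝ) : spar (-(c • Pi.single j 1)) ≤ 1 := by
  have h : suppF (-(c • Pi.single j 1 : Fin p → ℝ)) ⊆ {j} := by
    rw [suppF_subset_iff]
    intro i hi
    simp [mem_singleton.not.mp hi]
  exact (card_le_card h).trans (card_singleton j).le

lemma mem_Omega_of_suppF_subset {x y : Fin p → ℝ} {S T : Finset (Fin p)} {a b : ℕ}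
    (hx : suppF x ⊆ S) (hy : suppF y ⊆ T) (hS : S.card ≤ a) (hT : T.card ≤ b) :
    (x, y) ∈ Omega (a + b) := by
  refine ⟨?_, ?_, ?_⟩
  · exact (card_le_card hx).trans (hS.trans (Nat.le_add_right a b))
  · exact (card_le_card hy).trans (hT.trans (Nat.le_add_left b a))
  · exact (card_le_card (suppF_sub_subset_union hx hy)).trans
      ((card_union_le S T).trans (Nat.add_le_add hS hT))

lemma mem_OmegaT_add_smul_single {x : Fin p → ℝ} {a : ℕ} (hx : spar x ≤ a) (j : Fin p) (c : ℝ) :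
    (x, x + c • Pi.single j 1) ∈ OmegaT (a + 1) := by
  refine ⟨hx.trans (Nat.le_succ a), ?_, ?_⟩
  · exact (card_le_card (suppF_add_smul_single_subset subset_rfl j c)).trans
      ((card_insert_le j _).trans (Nat.succ_le_succ hx))
  · simpa using spar_neg_smul_single_le_one j c

lemma ContinuousLinearMap.apply_eq_sum_mul_single (L : (Fin p → ℝ) →L[ℝ] ℝ) (v : Fin p → ℝ) :
    L v = ∑ j, v j * L (Pi.single j 1) := by
  conv_lhs => rw [pi_eq_sum_univ' v, map_sum]
  simp

lemma fderiv_single_eq_zero_of_isMaxOn {l : (Fin p → ℝ) → ℝ} {x : Fin p → ℝ}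
    {S : Finset (Fin p)} (hl : DifferentiableAt ℝ l x) (hx : suppF x ⊆ S)
    (hmax : IsMaxOn l {v | suppF v ⊆ S} x) {j : Fin p} (hj : j ∈ S) :
    fderiv ℝ l x (Pi.single j 1) = 0 := by
  set e : Fin p → ℝ := Pi.single j 1
  have hline : HasDerivAt (fun t : ℝ => l (x + t • e)) (fderiv ℝ l x e) 0 := by
    have hx0 : HasFDerivAt l (fderiv ℝ l x) (x + (0 : ℝ) • e) := by simpa using hl.hasFDerivAt
    exact hx0.comp_hasDerivAt 0 (((hasDerivAt_id 0).smul_const e).const_add x |>.congr_deriv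
      (one_smul ℝ e))
  have hlocal : IsLocalMax (fun t : ℝ => l (x + t • e)) 0 :=
    Filter.Eventually.of_forall fun t => by
      simpa using hmax (show x + t • e ∈ {v | suppF v ⊆ S} from
        insert_eq_of_mem hj ▸ suppF_add_smul_single_subset hx j t)
  exact hlocal.hasDerivAt_eq_zero hline

lemma mul_sub_half_mul_sq_le {m : ℝ} (hm : 0 < m) (a d : ℝ) :
    a * d - m / 2 * a ^ 2 ≤ d ^ 2 / (2 * m) := by
  rw [le_div_iff₀ (by positivity)]
  nlinarith [sq_nonneg (d - m * a)]

lemma sub_le_card_mul_of_rStrongConcaveOn {l : (Fin p → ℝ) → ℝ} {m g : ℝ} (hm : 0 < m)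
    {Ω : Set ((Fin p → ℝ) × (Fin p → ℝ))} (hconc : RStrongConcaveOn l m Ω)
    {x y : Fin p → ℝ} (hxy : (x, y) ∈ Ω) {S T : Finset (Fin p)}
    (hx : suppF x ⊆ S) (hy : suppF y ⊆ T)
    (hstat : ∀ j ∈ S, fderiv ℝ l x (Pi.single j 1) = 0)
    (hg : ∀ j, |fderiv ℝ l x (Pi.single j 1)| ≤ |g|) :
    l y - l x ≤ T.card * (g ^ 2 / (2 * m)) := by
  set D : Fin p → ℝ := fun j => fderiv ℝ l x (Pi.single j 1)
  have hterm : ∀ j, (y j - x j) * D j - m / 2 * (y j - x j) ^ 2 ≤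
      if j ∈ T then g ^ 2 / (2 * m) else 0 := by
    intro j
    split_ifs with hjT
    · have hD : D j ^ 2 ≤ g ^ 2 := sq_le_sq.mpr (hg j)
      exact (mul_sub_half_mul_sq_le hm _ _).trans (by gcongr)
    · by_cases hjS : j ∈ S
      · have hDj : D j = 0 := hstat j hjS
        rw [hDj]
        nlinarith [sq_nonneg (y j - x j)]
      · simp [suppF_subset_iff.mp hx j hjS, suppF_subset_iff.mp hy j hjT]
  calc l y - l x ≤ ∑ j, ((y j - x j) * D j - m / 2 * (y j - x j) ^ 2) := by
        have hlin : fderiv ℝ l x (y - x) = ∑ j, (y j - x j) * D j :=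
          (fderiv ℝ l x).apply_eq_sum_mul_single (y - x)
        rw [sum_sub_distrib, ← mul_sum, ← hlin]
        linarith [hconc x y hxy]
    _ ≤ ∑ j, if j ∈ T then g ^ 2 / (2 * m) else 0 := sum_le_sum fun j _ => hterm j
    _ = T.card * (g ^ 2 / (2 * m)) := by
        rw [sum_ite_mem, univ_inter, sum_const, nsmul_eq_mul]

/-- The step `d / M` maximizes the smoothness lower bound `c d - (M / 2) c²` along `e_j`. -/
lemma sq_div_le_sub_of_rSmoothOn {l : (Fin p → ℝ) → ℝ} {M : ℝ} (hM : M ≠ 0)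
    {Ω : Set ((Fin p → ℝ) × (Fin p → ℝ))} (hsmooth : RSmoothOn l M Ω) {x : Fin p → ℝ}
    {j : Fin p} (hmem : (x, x + (fderiv ℝ l x (Pi.single j 1) / M) • Pi.single j 1) ∈ Ω) :
    fderiv ℝ l x (Pi.single j 1) ^ 2 / (2 * M) ≤
      l (x + (fderiv ℝ l x (Pi.single j 1) / M) • Pi.single j 1) - l x := by
  set d := fderiv ℝ l x (Pi.single j 1)
  have hsq : ∑ i, ((x + (d / M) • Pi.single j 1 : Fin p → ℝ) i - x i) ^ 2 = (d / M) ^ 2 := by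
    simp [Pi.single_apply, ite_pow]
  have h := hsmooth x _ hmem
  rw [hsq, add_sub_cancel_left, map_smul, smul_eq_mul] at h
  have hgain : d / M * d - M / 2 * (d / M) ^ 2 = d ^ 2 / (2 * M) := by
    field_simp
    ring
  linarith

theorem omp_increment_general
    (p : ℕ) (l : (Fin p → ℝ) → ℝ) (hl : Differentiable ℝ l)
    (β : Finset (Fin p) → (Fin p → ℝ))
    (hβsupp : ∀ S : Finset (Fin p), suppF (β S) ⊆ S)
    (hβmax : ∀ S : Finset (Fin p), ∀ v : Fin p → ℝ, suppF v ⊆ S → l v ≤ l (β S))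
    (f : Finset (Fin p) → ℝ) (hf : ∀ S, f S = l (β S) - l 0)
    (k : ℕ) (Sstar : Finset (Fin p)) (hSstarcard : Sstar.card = k)
    (Sp : ℕ → Finset (Fin p)) (s : ℕ → Fin p)
    (hSps : ∀ i, Sp (i + 1) = insert (s i) (Sp i))
    (homp : ∀ i, ∀ j : Fin p, |fderiv ℝ l (β (Sp i)) (Pi.single j 1)| ≤
      |fderiv ℝ l (β (Sp i)) (Pi.single (s i) 1)|)
    (i : ℕ) (hcard : (Sp i).card = i)
    (m M : ℝ) (hm : 0 < m) (hmM : m ≤ M)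
    (hconc : RStrongConcaveOn l m (Omega (i + k)))
    (hsmooth : RSmoothOn l M (OmegaT (i + 1))) :
    (m / M) * (f Sstar - f (Sp i)) ≤ (k : ℝ) * (f (Sp (i + 1)) - f (Sp i)) := by
  have hM : 0 < M := hm.trans_le hmM
  set x := β (Sp i)
  set G := fderiv ℝ l x (Pi.single (s i) 1)
  have hstat : ∀ j ∈ Sp i, fderiv ℝ l x (Pi.single j 1) = 0 := fun j hj =>
    fderiv_single_eq_zero_of_isMaxOn (hl x) (hβsupp _) (fun v hv => hβmax _ v hv) hj
  have hupper : f Sstar - f (Sp i) ≤ k * (G ^ 2 / (2 * m)) := by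
    rw [hf, hf, sub_sub_sub_cancel_right, ← hSstarcard]
    exact sub_le_card_mul_of_rStrongConcaveOn hm hconc
      (mem_Omega_of_suppF_subset (hβsupp _) (hβsupp _) hcard.le hSstarcard.le)
      (hβsupp _) (hβsupp _) hstat (homp i)
  have hlower : G ^ 2 / (2 * M) ≤ f (Sp (i + 1)) - f (Sp i) := by
    have hstep : suppF (x + (G / M) • Pi.single (s i) 1) ⊆ Sp (i + 1) :=
      hSps i ▸ suppF_add_smul_single_subset (hβsupp _) (s i) (G / M)
    rw [hf, hf, sub_sub_sub_cancel_right]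
    exact (sq_div_le_sub_of_rSmoothOn hM.ne' hsmooth (mem_OmegaT_add_smul_single
      (hcard ▸ card_le_card (hβsupp _)) _ _)).trans (sub_le_sub_right (hβmax _ _ hstep) _)
  calc m / M * (f Sstar - f (Sp i)) ≤ m / M * (k * (G ^ 2 / (2 * m))) := by gcongr
    _ = k * (G ^ 2 / (2 * M)) := by field_simp
    _ ≤ k * (f (Sp (i + 1)) - f (Sp i)) := by gcongr

/-- OMP increment lemma. -/
theorem omp_increment
    (p : ℕ) (l : (Fin p → ℝ) → ℝ) (hl : Differentiable ℝ l)
    (β : Finset (Fin p) → (Fin p → ℝ))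
    (hβsupp : ∀ S : Finset (Fin p), suppF (β S) ⊆ S)
    (hβmax : ∀ S : Finset (Fin p), ∀ v : Fin p → ℝ, suppF v ⊆ S → l v ≤ l (β S))
    (f : Finset (Fin p) → ℝ) (hf : ∀ S, f S = l (β S) - l 0)
    (k : ℕ) (Sstar : Finset (Fin p)) (hSstarcard : Sstar.card = k)
    (Sp : ℕ → Finset (Fin p)) (s : ℕ → Fin p)
    (hSp0 : Sp 0 = ∅)
    (hSps : ∀ i, Sp (i + 1) = insert (s i) (Sp i))
    (homp : ∀ i, ∀ j : Fin p, |fderiv ℝ l (β (Sp i)) (Pi.single j 1)| ≤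
      |fderiv ℝ l (β (Sp i)) (Pi.single (s i) 1)|)
    (i : ℕ) (hcard : (Sp i).card = i)
    (m M : ℝ) (hm : 0 < m) (hmM : m ≤ M)
    (hconc : RStrongConcaveOn l m (Omega (i + k)))
    (hsmooth : RSmoothOn l M (OmegaT (i + 1))) :
    (m / M) * (f Sstar - f (Sp i)) ≤ (k : ℝ) * (f (Sp (i + 1)) - f (Sp i)) :=
  omp_increment_general p l hl β hβsupp hβmax f hf k Sstar hSstarcard Sp s hSps homp i hcard m M hm
    hmM hconc hsmooth
end
end
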